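/- Let d ≥ 1 and L ≥ 1. Let φ^1, …, φ^L ∈ L²(ℝ^d). For each ℓ ∈ {1,…,L}, let (h_n^ℓ)_{n∈ℕ} be a sequence of positive reals (a scale) and (κ_n^ℓ)_{n∈ℕ} a sequence in ℝ^d (a concentration core). Assume pairwise orthogonality: for all ℓ ≠ ℓ', either |log(h_n^ℓ / h_n^{ℓ'})| → ∞ as n → ∞, or (h_n^ℓ = h_n^{ℓ'} for all n and |κ_n^ℓ − κ_n^{ℓ'}| / h_n^ℓ → ∞ as n → ∞). Then ‖∑_{ℓ=1}^L (h_n^ℓ)^{-d/2} φ^ℓ((· − κ_n^ℓ)/h_n^ℓ)‖²_{L²(ℝ^d)} → ∑_{ℓ=1}^L ‖φ^ℓ‖²_{L²(ℝ^d)} as n → ∞. -/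

import Mathlib

open MeasureTheory
open scoped Topology

/-!
The rescalings `T_{h,κ} φ = h^{-d/2} φ(h⁻¹ • (· - κ))` satisfy
`⟪T_{h,κ} φ, T_{h',κ'} ψ⟫ = ⟪φ, T_{h'/h, h⁻¹ • (κ' - κ)} ψ⟫`; in particular they are isometries of
`L²`. Expanding the square of the norm of the sum, the diagonal terms give `∑ ‖φ^ℓ‖²` and each cross
term is `⟪φ, T_{a_n,b_n} ψ⟫` for a relative pair `(a_n, b_n)` that escapes to infinity. Since the
`T_{a_n,b_n}` are uniformly bounded, it suffices to show that such pairings vanish for continuous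
compactly supported `φ, ψ`. If `|log a_n| → ∞`, the pairing is bounded by
`C · min (a_n^{-d/2}, a_n^{d/2})`; if `a_n = 1` and `|b_n| → ∞`, the supports are eventually
disjoint.
-/

open Filter Module ComplexConjugate
open scoped InnerProductSpace

namespace AlmostOrthogonality

variable {ι : Type*} {l : Filter ι}

theorem tendsto_inner_zero_of_approx {𝕜 E : Type*} [RCLike 𝕜] [NormedAddCommGroup E]
    [InnerProductSpace 𝕜 E] {x : E} {y : ι → E} {C : ℝ} (hy : ∀ i, ‖y i‖ ≤ C)
    (happrox : ∀ δ > 0, ∃ (x' : E) (y' : ι → E), ‖x - x'‖ ≤ δ ∧ (∀ i, ‖y i - y' i‖ ≤ δ) ∧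
      Tendsto (fun i => ⟪x', y' i⟫_𝕜) l (𝓝 0)) :
    Tendsto (fun i => ⟪x, y i⟫_𝕜) l (𝓝 0) := by
  rw [NormedAddGroup.tendsto_nhds_zero]
  intro ε hε
  set K := |C| + ‖x‖ + 1
  set δ := min 1 (ε / (2 * K))
  have hδ : 0 < δ := by positivity
  obtain ⟨x', y', hxx', hyy', hlim⟩ := happrox δ hδ
  have hx' : ‖x'‖ ≤ ‖x‖ + 1 := by
    have := norm_le_insert' x' x
    rw [norm_sub_rev] at hxx'
    linarith [min_le_left 1 (ε / (2 * K))]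
  have hδK : δ * K ≤ ε / 2 := by
    have := min_le_right 1 (ε / (2 * K))
    rw [le_div_iff₀ (by positivity)] at this
    linarith
  filter_upwards [NormedAddGroup.tendsto_nhds_zero.1 hlim (ε / 2) (half_pos hε)] with i hi
  have hsplit : ⟪x, y i⟫_𝕜 = ⟪x - x', y i⟫_𝕜 + ⟪x', y i - y' i⟫_𝕜 + ⟪x', y' i⟫_𝕜 := by
    rw [inner_sub_left, inner_sub_right]; ring
  calc ‖⟪x, y i⟫_𝕜‖ ≤ ‖x - x'‖ * ‖y i‖ + ‖x'‖ * ‖y i - y' i‖ + ‖⟪x', y' i⟫_𝕜‖ := by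
        rw [hsplit]
        refine norm_add₃_le.trans ?_
        gcongr <;> exact norm_inner_le_norm _ _
    _ ≤ δ * |C| + (‖x‖ + 1) * δ + ‖⟪x', y' i⟫_𝕜‖ := by
        gcongr
        exacts [(hy i).trans (le_abs_self C), hyy' i]
    _ < ε := by linarith

section L2Pairing

variable {α : Type*} [MeasurableSpace α] {μ : Measure α} {f g : α → ℂ}

theorem integral_conj_mul_eq_inner (hf : MemLp f 2 μ) (hg : MemLp g 2 μ) :
    ∫ x, conj (f x) * g x ∂μ = ⟪hf.toLp f, hg.toLp g⟫_ℂ := by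
  rw [L2.inner_def]
  refine integral_congr_ae ?_
  filter_upwards [hf.coeFn_toLp, hg.coeFn_toLp] with x hfx hgx
  rw [hfx, hgx, RCLike.inner_apply, mul_comm]

theorem re_integral_conj_mul_self (hf : MemLp f 2 μ) :
    (∫ x, conj (f x) * f x ∂μ).re = (eLpNorm f 2 μ).toReal ^ 2 := by
  rw [integral_conj_mul_eq_inner hf hf, ← Lp.norm_toLp f hf, @norm_sq_eq_re_inner ℂ]
  rfl

theorem eLpNorm_sum_toReal_sq (s : Finset ι) {f : ι → α → ℂ}
    (hf : ∀ i, MemLp (f i) 2 μ) :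
    (eLpNorm (fun x => ∑ i ∈ s, f i x) 2 μ).toReal ^ 2
      = ∑ i ∈ s, ∑ j ∈ s, (∫ x, conj (f i x) * f j x ∂μ).re := by
  have hint : ∀ i j, Integrable (fun x => conj (f i x) * f j x) μ := fun i j =>
    ((hf i).star).integrable_mul (hf j)
  rw [← re_integral_conj_mul_self (memLp_finsetSum s fun i _ => hf i)]
  simp_rw [map_sum, Finset.sum_mul_sum]
  rw [integral_finsetSum _ fun i _ => integrable_finsetSum _ fun j _ => hint i j,
    Complex.re_sum]
  refine Finset.sum_congr rfl fun i _ => ?_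
  rw [integral_finsetSum _ fun j _ => hint i j, Complex.re_sum]

end L2Pairing

section Rescale

variable {E : Type*} [NormedAddCommGroup E] [NormedSpace ℝ E]

noncomputable def rescale (a : ℝ) (b : E) (f : E → ℂ) : E → ℂ :=
  fun x => ((a ^ (-(finrank ℝ E : ℝ) / 2) : ℝ) : ℂ) * f (a⁻¹ • (x - b))

theorem rescale_one_zero (f : E → ℂ) : rescale 1 0 f = f := by
  ext x
  simp [rescale]

theorem rescale_sub (a : ℝ) (b : E) (f g : E → ℂ) :
    rescale a b (f - g) = rescale a b f - rescale a b g := by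
  ext x
  simp [rescale, mul_sub]

def OrthogonalScaleCores (l : Filter ι) (h h' : ι → ℝ) (κ κ' : ι → E) : Prop :=
  Tendsto (fun n => |Real.log (h n / h' n)|) l atTop ∨
    ((∀ n, h n = h' n) ∧ Tendsto (fun n => ‖κ n - κ' n‖ / h n) l atTop)

variable [MeasurableSpace E] {μ : Measure E} {a : ℝ}

theorem norm_integral_conj_mul_rescale_le {g g' : E → ℂ} (hg : Integrable g μ) {C' : ℝ}
    (hC' : ∀ x, ‖g' x‖ ≤ C') (ha : 0 < a) (b : E) :
    ‖∫ x, conj (g x) * rescale a b g' x ∂μ‖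
      ≤ a ^ (-(finrank ℝ E : ℝ) / 2) * (C' * ∫ x, ‖g x‖ ∂μ) := by
  have hs : 0 < a ^ (-(finrank ℝ E : ℝ) / 2) := Real.rpow_pos_of_pos ha _
  refine (norm_integral_le_of_norm_le (hg.norm.mul_const (a ^ (-(finrank ℝ E : ℝ) / 2) * C'))
    (Eventually.of_forall fun x => ?_)).trans_eq ?_
  · simp only [rescale, norm_mul, Complex.norm_conj, Complex.norm_real, Real.norm_eq_abs,
      abs_of_pos hs]
    gcongr
    exact hC' _
  · rw [integral_mul_const]
    ring

theorem tendsto_integral_conj_mul_rescale_one_of_tendsto_norm {g g' : E → ℂ}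
    (hgs : HasCompactSupport g) (hgs' : HasCompactSupport g') {b : ι → E}
    (hb : Tendsto (fun i => ‖b i‖) l atTop) :
    Tendsto (fun i => ∫ x, conj (g x) * rescale 1 (b i) g' x ∂μ) l (𝓝 0) := by
  obtain ⟨R, hR⟩ := hgs.isBounded.subset_closedBall 0
  obtain ⟨R', hR'⟩ := hgs'.isBounded.subset_closedBall 0
  refine tendsto_const_nhds.congr' ?_
  filter_upwards [hb.eventually_gt_atTop (R + R')] with i hi
  have hzero : ∀ x, conj (g x) * rescale 1 (b i) g' x = 0 := by
    intro x
    by_cases hx : x ∈ tsupport g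
    · have hx' : x - b i ∉ tsupport g' := fun hmem => by
        have h1 := hR hx
        have h2 := hR' hmem
        rw [mem_closedBall_zero_iff] at h1 h2
        linarith [norm_le_insert x (b i)]
      simp [rescale, image_eq_zero_of_notMem_tsupport hx']
    · simp [image_eq_zero_of_notMem_tsupport hx]
  simp [hzero]

variable [FiniteDimensional ℝ E] [BorelSpace E] [μ.IsAddHaarMeasure]

theorem integral_eq_pow_smul_integral_comp_smul_add {F : Type*} [NormedAddCommGroup F]
    [NormedSpace ℝ F] (f : E → F) (ha : 0 < a) (b : E) :
    ∫ x, f x ∂μ = a ^ finrank ℝ E • ∫ y, f (a • y + b) ∂μ := by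
  have h := μ.integral_comp_inv_smul_of_nonneg (fun y => f (a • y + b)) ha.le
  simp_rw [smul_inv_smul₀ ha.ne', integral_add_right_eq_self f b] at h
  exact h

theorem measurePreserving_inv_smul_sub (ha : 0 < a) (b : E) :
    MeasurePreserving (fun x => a⁻¹ • (x - b)) μ (ENNReal.ofReal (a ^ finrank ℝ E) • μ) := by
  refine ⟨by fun_prop, ?_⟩
  have hcomp : (fun x : E => a⁻¹ • (x - b)) = (a⁻¹ • ·) ∘ (· - b) := rfl
  rw [hcomp, ← Measure.map_map (by fun_prop) (by fun_prop),
    (measurePreserving_sub_right μ b).map_eq, Measure.map_addHaar_smul μ (inv_ne_zero ha.ne'),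
    ← inv_pow, inv_inv, abs_of_pos (pow_pos ha _)]

theorem memLp_rescale {f : E → ℂ} (hf : MemLp f 2 μ) (ha : 0 < a) (b : E) :
    MemLp (rescale a b f) 2 μ :=
  ((hf.smul_measure ENNReal.ofReal_ne_top).comp_measurePreserving
    (measurePreserving_inv_smul_sub ha b)).const_mul _

theorem integral_conj_rescale_mul_rescale (f g : E → ℂ) {a' : ℝ} (ha : 0 < a) (ha' : 0 < a')
    (b b' : E) :
    ∫ x, conj (rescale a b f x) * rescale a' b' g x ∂μ
      = ∫ y, conj (f y) * rescale (a' / a) (a⁻¹ • (b' - b)) g y ∂μ := by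
  set s : ℝ := -(finrank ℝ E : ℝ) / 2
  have hscal : a ^ finrank ℝ E * a ^ s * a' ^ s = (a' / a) ^ s := by
    rw [Real.div_rpow ha'.le ha.le, ← Real.rpow_natCast, ← Real.rpow_add ha,
      div_eq_mul_inv, ← Real.rpow_neg ha.le, show (finrank ℝ E : ℝ) + s = -s by simp only [s]; ring,
      mul_comm]
  have harg : ∀ y : E, a'⁻¹ • (a • y + b - b') = (a' / a)⁻¹ • (y - a⁻¹ • (b' - b)) := by
    intro y
    match_scalars <;> field_simp
  rw [integral_eq_pow_smul_integral_comp_smul_add _ ha b, ← integral_smul]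
  refine integral_congr_ae (Eventually.of_forall fun y => ?_)
  simp only [rescale, map_mul, Complex.conj_ofReal, add_sub_cancel_right,
    inv_smul_smul₀ ha.ne', harg, Complex.real_smul]
  rw [← hscal]
  push_cast
  ring

theorem eLpNorm_rescale {f : E → ℂ} (hf : MemLp f 2 μ) (ha : 0 < a) (b : E) :
    eLpNorm (rescale a b f) 2 μ = eLpNorm f 2 μ := by
  have hsq : (eLpNorm (rescale a b f) 2 μ).toReal ^ 2 = (eLpNorm f 2 μ).toReal ^ 2 := by
    rw [← re_integral_conj_mul_self (memLp_rescale hf ha b), ← re_integral_conj_mul_self hf,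
      integral_conj_rescale_mul_rescale f f ha ha b b, div_self ha.ne', sub_self, smul_zero,
      rescale_one_zero]
  rwa [sq_eq_sq₀ ENNReal.toReal_nonneg ENNReal.toReal_nonneg,
    ENNReal.toReal_eq_toReal_iff' (memLp_rescale hf ha b).eLpNorm_ne_top hf.eLpNorm_ne_top] at hsq

theorem norm_integral_conj_mul_rescale_le' {g g' : E → ℂ} (hg' : Integrable g' μ) {C : ℝ}
    (hC : ∀ x, ‖g x‖ ≤ C) (ha : 0 < a) (b : E) :
    ‖∫ x, conj (g x) * rescale a b g' x ∂μ‖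
      ≤ a ^ ((finrank ℝ E : ℝ) / 2) * (C * ∫ x, ‖g' x‖ ∂μ) := by
  -- the adjoint of `rescale a b` is `rescale a⁻¹ (-(a⁻¹ • b))`
  have hswap : ∫ x, conj (g x) * rescale a b g' x ∂μ
      = conj (∫ y, conj (g' y) * rescale a⁻¹ (a⁻¹ • (0 - b)) g y ∂μ) := by
    have h := integral_conj_rescale_mul_rescale (μ := μ) g' g ha one_pos b 0
    rw [one_div] at h
    rw [← h, rescale_one_zero, ← integral_conj]
    simp only [map_mul, Complex.conj_conj, mul_comm]
  rw [hswap, Complex.norm_conj]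
  refine (norm_integral_conj_mul_rescale_le hg' hC (inv_pos.2 ha) _).trans_eq ?_
  rw [Real.inv_rpow ha.le, ← Real.rpow_neg ha.le, neg_div, neg_neg]

theorem norm_integral_conj_mul_rescale_le_exp {g g' : E → ℂ} (hg : Integrable g μ)
    (hg' : Integrable g' μ) {C C' : ℝ} (hC : ∀ x, ‖g x‖ ≤ C) (hC' : ∀ x, ‖g' x‖ ≤ C')
    (ha : 0 < a) (b : E) :
    ‖∫ x, conj (g x) * rescale a b g' x ∂μ‖
      ≤ max (C' * ∫ x, ‖g x‖ ∂μ) (C * ∫ x, ‖g' x‖ ∂μ)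
          * Real.exp (-((finrank ℝ E : ℝ) / 2) * |Real.log a|) := by
  rcases le_total 0 (Real.log a) with hlog | hlog
  · rw [abs_of_nonneg hlog, mul_comm, ← neg_div, mul_comm _ (Real.log a), ← Real.rpow_def_of_pos ha]
    exact (norm_integral_conj_mul_rescale_le hg hC' ha b).trans
      (by gcongr; exact le_max_left _ _)
  · rw [abs_of_nonpos hlog, mul_comm, neg_mul_neg, mul_comm _ (Real.log a),
      ← Real.rpow_def_of_pos ha]
    exact (norm_integral_conj_mul_rescale_le' hg' hC ha b).trans
      (by gcongr; exact le_max_right _ _)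

theorem tendsto_integral_conj_mul_rescale_of_tendsto_abs_log [Nontrivial E] {g g' : E → ℂ}
    (hg : Continuous g) (hgs : HasCompactSupport g)
    (hg' : Continuous g') (hgs' : HasCompactSupport g') {a : ι → ℝ} (ha : ∀ i, 0 < a i)
    (hlog : Tendsto (fun i => |Real.log (a i)|) l atTop) (b : ι → E) :
    Tendsto (fun i => ∫ x, conj (g x) * rescale (a i) (b i) g' x ∂μ) l (𝓝 0) := by
  obtain ⟨x₀, hx₀⟩ := hg.norm.exists_forall_ge_of_hasCompactSupport hgs.norm
  obtain ⟨x₁, hx₁⟩ := hg'.norm.exists_forall_ge_of_hasCompactSupport hgs'.norm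
  have hdim : (0 : ℝ) < finrank ℝ E / 2 := by
    have := finrank_pos (R := ℝ) (M := E)
    positivity
  have hexp : Tendsto (fun i => Real.exp (-((finrank ℝ E : ℝ) / 2) * |Real.log (a i)|)) l (𝓝 0) :=
    Real.tendsto_exp_atBot.comp (hlog.const_mul_atTop_of_neg (neg_lt_zero.2 hdim))
  refine squeeze_zero_norm (fun i => norm_integral_conj_mul_rescale_le_exp
    (hg.integrable_of_hasCompactSupport hgs) (hg'.integrable_of_hasCompactSupport hgs') hx₀ hx₁
    (ha i) (b i)) ?_
  simpa using hexp.const_mul _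

theorem tendsto_integral_conj_mul_rescale_of_hasCompactSupport {a : ι → ℝ} (ha : ∀ i, 0 < a i)
    {b : ι → E} (hcc : ∀ g g' : E → ℂ, Continuous g → HasCompactSupport g → Continuous g' →
      HasCompactSupport g' →
        Tendsto (fun i => ∫ x, conj (g x) * rescale (a i) (b i) g' x ∂μ) l (𝓝 0))
    {f f' : E → ℂ} (hf : MemLp f 2 μ) (hf' : MemLp f' 2 μ) :
    Tendsto (fun i => ∫ x, conj (f x) * rescale (a i) (b i) f' x ∂μ) l (𝓝 0) := by
  refine Tendsto.congr
    (fun i => (integral_conj_mul_eq_inner hf (memLp_rescale hf' (ha i) (b i))).symm) ?_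
  refine tendsto_inner_zero_of_approx (C := (eLpNorm f' 2 μ).toReal)
    (fun i => by rw [Lp.norm_toLp, eLpNorm_rescale hf' (ha i)]) fun δ hδ => ?_
  have hδ' : ENNReal.ofReal δ ≠ 0 := (ENNReal.ofReal_pos.2 hδ).ne'
  obtain ⟨g, hgs, hfg, hgc, hg⟩ :=
    hf.exists_hasCompactSupport_eLpNorm_sub_le ENNReal.ofNat_ne_top hδ'
  obtain ⟨g', hgs', hfg', hgc', hg'⟩ :=
    hf'.exists_hasCompactSupport_eLpNorm_sub_le ENNReal.ofNat_ne_top hδ'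
  refine ⟨hg.toLp g, fun i => (memLp_rescale hg' (ha i) (b i)).toLp _, ?_, fun i => ?_, ?_⟩
  · rw [← MemLp.toLp_sub, Lp.norm_toLp]
    exact ENNReal.toReal_le_of_le_ofReal hδ.le hfg
  · rw [← MemLp.toLp_sub, Lp.norm_toLp, ← rescale_sub, eLpNorm_rescale (hf'.sub hg') (ha i)]
    exact ENNReal.toReal_le_of_le_ofReal hδ.le hfg'
  · exact (hcc g g' hgc hgs hgc' hgs').congr
      fun i => integral_conj_mul_eq_inner hg (memLp_rescale hg' (ha i) (b i))

theorem OrthogonalScaleCores.tendsto_integral_conj_rescale_mul_rescale [Nontrivial E]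
    {h h' : ι → ℝ} {κ κ' : ι → E}
    (horth : OrthogonalScaleCores l h h' κ κ') (hh : ∀ i, 0 < h i) (hh' : ∀ i, 0 < h' i)
    {f f' : E → ℂ} (hf : MemLp f 2 μ) (hf' : MemLp f' 2 μ) :
    Tendsto (fun i => ∫ x, conj (rescale (h i) (κ i) f x) * rescale (h' i) (κ' i) f' x ∂μ)
      l (𝓝 0) := by
  refine Tendsto.congr
    (fun i => (integral_conj_rescale_mul_rescale f f' (hh i) (hh' i) (κ i) (κ' i)).symm) ?_
  refine tendsto_integral_conj_mul_rescale_of_hasCompactSupport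
    (fun i => div_pos (hh' i) (hh i)) (fun g g' hg hgs hg' hgs' => ?_) hf hf'
  rcases horth with hlog | ⟨heq, hcore⟩
  · refine tendsto_integral_conj_mul_rescale_of_tendsto_abs_log hg hgs hg' hgs'
      (fun i => div_pos (hh' i) (hh i)) (hlog.congr fun i => ?_) _
    rw [← inv_div, Real.log_inv, abs_neg]
  · have hone : ∀ i, h' i / h i = 1 := fun i => by rw [← heq i, div_self (hh i).ne']
    simp only [hone]
    refine tendsto_integral_conj_mul_rescale_one_of_tendsto_norm hgs hgs' (hcore.congr fun i => ?_)
    rw [norm_smul, norm_inv, Real.norm_of_nonneg (hh i).le, norm_sub_rev, div_eq_inv_mul]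

end Rescale

end AlmostOrthogonality

open AlmostOrthogonality in
theorem almost_orthogonality_L2_general (d : ℕ) (hd : 1 ≤ d) (L : ℕ)
    (φ : Fin L → EuclideanSpace ℝ (Fin d) → ℂ)
    (hφ : ∀ ℓ, MemLp (φ ℓ) 2 (volume : Measure (EuclideanSpace ℝ (Fin d))))
    (h : Fin L → ℕ → ℝ) (hpos : ∀ ℓ n, 0 < h ℓ n)
    (κ : Fin L → ℕ → EuclideanSpace ℝ (Fin d))
    (horth : ∀ ℓ ℓ', ℓ ≠ ℓ' →
      Filter.Tendsto (fun n => |Real.log (h ℓ n / h ℓ' n)|)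
        Filter.atTop Filter.atTop ∨
      ((∀ n, h ℓ n = h ℓ' n) ∧
        Filter.Tendsto (fun n => ‖κ ℓ n - κ ℓ' n‖ / h ℓ n)
          Filter.atTop Filter.atTop)) :
    Filter.Tendsto
      (fun n : ℕ =>
        ((eLpNorm
          (fun x : EuclideanSpace ℝ (Fin d) =>
            ∑ ℓ : Fin L,
              ((h ℓ n ^ (-(d : ℝ)/2) : ℝ) : ℂ) * φ ℓ ((h ℓ n)⁻¹ • (x - κ ℓ n)))
          2 volume).toReal) ^ 2)
      Filter.atTop
      (𝓝 (∑ ℓ : Fin L, ((eLpNorm (φ ℓ) 2 volume).toReal) ^ 2)) := by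
  have : Nontrivial (EuclideanSpace ℝ (Fin d)) :=
    Module.finrank_pos_iff (R := ℝ).1 (by rwa [finrank_euclideanSpace_fin])
  have hexpand : ∀ n, (eLpNorm (fun x => ∑ ℓ : Fin L,
      ((h ℓ n ^ (-(d : ℝ)/2) : ℝ) : ℂ) * φ ℓ ((h ℓ n)⁻¹ • (x - κ ℓ n))) 2 volume).toReal ^ 2
      = ∑ ℓ, ∑ ℓ', (∫ x, conj (rescale (h ℓ n) (κ ℓ n) (φ ℓ) x)
          * rescale (h ℓ' n) (κ ℓ' n) (φ ℓ') x).re := fun n => by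
    rw [← eLpNorm_sum_toReal_sq _ fun ℓ => memLp_rescale (hφ ℓ) (hpos ℓ n) (κ ℓ n)]
    simp [rescale]
  refine Tendsto.congr (fun n => (hexpand n).symm) ?_
  have hlim : ∑ ℓ, (eLpNorm (φ ℓ) 2 volume).toReal ^ 2
      = ∑ ℓ, ∑ ℓ', if ℓ = ℓ' then (eLpNorm (φ ℓ) 2 volume).toReal ^ 2 else 0 := by
    simp
  rw [hlim]
  refine tendsto_finsetSum _ fun ℓ _ => tendsto_finsetSum _ fun ℓ' _ => ?_
  rcases eq_or_ne ℓ ℓ' with rfl | hne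
  · refine tendsto_const_nhds.congr fun n => ?_
    rw [if_pos rfl, re_integral_conj_mul_self (memLp_rescale (hφ ℓ) (hpos ℓ n) _),
      eLpNorm_rescale (hφ ℓ) (hpos ℓ n)]
  · have hO : OrthogonalScaleCores atTop (h ℓ) (h ℓ') (κ ℓ) (κ ℓ') := horth ℓ ℓ' hne
    simpa only [if_neg hne, Complex.zero_re, Function.comp_def] using
      (Complex.continuous_re.tendsto 0).comp
        (hO.tendsto_integral_conj_rescale_mul_rescale (hpos ℓ) (hpos ℓ') (hφ ℓ) (hφ ℓ'))

/-- Almost orthogonality in `L²(ℝ^d)`: if the scale-core pairs `(h^ℓ, κ^ℓ)`,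
`ℓ = 1, …, L`, are pairwise orthogonal, then the squared `L²` norm of
`∑_ℓ (h_n^ℓ)^{-d/2} φ^ℓ((· - κ_n^ℓ)/h_n^ℓ)` converges to `∑_ℓ ‖φ^ℓ‖²` as `n → ∞`. -/
theorem almost_orthogonality_L2 (d : ℕ) (hd : 1 ≤ d) (L : ℕ) (hL : 1 ≤ L)
    (φ : Fin L → EuclideanSpace ℝ (Fin d) → ℂ)
    (hφ : ∀ ℓ, MemLp (φ ℓ) 2 (volume : Measure (EuclideanSpace ℝ (Fin d))))
    (h : Fin L → ℕ → ℝ) (hpos : ∀ ℓ n, 0 < h ℓ n)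
    (κ : Fin L → ℕ → EuclideanSpace ℝ (Fin d))
    (horth : ∀ ℓ ℓ', ℓ ≠ ℓ' →
      Filter.Tendsto (fun n => |Real.log (h ℓ n / h ℓ' n)|)
        Filter.atTop Filter.atTop ∨
      ((∀ n, h ℓ n = h ℓ' n) ∧
        Filter.Tendsto (fun n => ‖κ ℓ n - κ ℓ' n‖ / h ℓ n)
          Filter.atTop Filter.atTop)) :
    Filter.Tendsto
      (fun n : ℕ =>
        ((eLpNorm
          (fun x : EuclideanSpace ℝ (Fin d) =>
            ∑ ℓ : Fin L,
              ((h ℓ n ^ (-(d : ℝ)/2) : ℝ) : ℂ) * φ ℓ ((h ℓ n)⁻¹ • (x - κ ℓ n)))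
          2 volume).toReal) ^ 2)
      Filter.atTop
      (𝓝 (∑ ℓ : Fin L, ((eLpNorm (φ ℓ) 2 volume).toReal) ^ 2)) :=
  almost_orthogonality_L2_general d hd L φ hφ h hpos κ horth
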